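/- arXiv:1710.07827 — 3 statements merged into one kernel-verified Lean document; each statement's English description precedes it below -/
import Mathlib

section
/- Let n ≥ 2 be an integer and let s be a complex number with Re(s) > 1. Then ∑_{q ≥ 1} μ(q)·c_q(n)/(q^{s−1}·φ(q)) = ∏_{p | n} (1 − p^{1−s}) · ∏_{p prime, p ∤ n} (1 + 1/(p^{s−1}(p−1))), where the infinite product over primes not dividing n converges. -/
open Finset ArithmeticFunction
open scoped ArithmeticFunction.Moebius

/-- The Ramanujan sum `c_q(n) = ∑_{1 ≤ k ≤ q, gcd(k,q)=1} exp(2πikn/q)`. -/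
noncomputable def ramanujanSum (q n : ℕ) : ℂ :=
  ∑ k ∈ (Finset.Icc 1 q).filter (fun k => Nat.gcd k q = 1),
    Complex.exp (2 * (Real.pi : ℂ) * Complex.I * (k : ℂ) * (n : ℂ) / (q : ℂ))

lemma fullSum (n m : ℕ) (hm : 1 ≤ m) :
    ∑ k ∈ Finset.Icc 1 m, Complex.exp (2 * (Real.pi : ℂ) * Complex.I * (k : ℂ) * (n : ℂ) / (m : ℂ))
      = if m ∣ n then (m : ℂ) else 0 := by
  have hm0 : (m : ℂ) ≠ 0 := Nat.cast_ne_zero.mpr (by omega)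
  set z : ℂ := Complex.exp (2 * (Real.pi : ℂ) * Complex.I * (n : ℂ) / (m : ℂ)) with hz
  have hterm : ∀ k : ℕ, Complex.exp (2 * (Real.pi : ℂ) * Complex.I * (k : ℂ) * (n : ℂ) / (m : ℂ)) = z ^ k := by
    intro k
    rw [hz, ← Complex.exp_nat_mul]
    ring_nf
  have hzm : z ^ m = 1 := by
    rw [← hterm m]
    have : 2 * (Real.pi : ℂ) * Complex.I * (m : ℂ) * (n : ℂ) / (m : ℂ) = (n : ℂ) * (2 * (Real.pi : ℂ) * Complex.I) := by
      field_simp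
    rw [this]
    exact_mod_cast Complex.exp_int_mul_two_pi_mul_I n
  simp only [hterm]
  by_cases hd : m ∣ n
  · have hz1 : z = 1 := by
      obtain ⟨c, rfl⟩ := hd
      have : 2 * (Real.pi : ℂ) * Complex.I * ((m * c : ℕ) : ℂ) / (m : ℂ) = (c : ℂ) * (2 * (Real.pi : ℂ) * Complex.I) := by
        push_cast; field_simp
      rw [hz, this]
      exact_mod_cast Complex.exp_int_mul_two_pi_mul_I c
    simp [hz1, hd, Nat.card_Icc]
  · have hzne : z ≠ 1 := by
      intro h
      rw [hz, Complex.exp_eq_one_iff] at h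
      obtain ⟨k, hk⟩ := h
      have h2 : (2 * (Real.pi : ℂ) * Complex.I) ≠ 0 := by
        simp [Real.pi_ne_zero, Complex.I_ne_zero, Complex.ofReal_ne_zero]
      have : (n : ℂ) = (k : ℂ) * (m : ℂ) := by
        field_simp at hk
        -- hk : 2 * π * I * n = k * (2 * π * I) * m   (roughly)
        have := hk
        apply mul_left_cancel₀ h2
        rw [mul_comm (k : ℂ) (m : ℂ)] at *
        linear_combination (2 * (Real.pi : ℂ) * Complex.I) * this
      have hnz : (n : ℤ) = k * m := by exact_mod_cast this
      exact hd (by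
        have h3 : (m : ℤ) ∣ (n : ℤ) := ⟨k, by linarith [hnz]⟩
        exact_mod_cast h3)
    rw [if_neg hd]
    have hins : Finset.range (m + 1) = insert 0 (Finset.Icc 1 m) := by
      ext k
      simp only [Finset.mem_range, Finset.mem_insert, Finset.mem_Icc]
      omega
    have h0 : ∑ k ∈ Finset.range (m + 1), z ^ k = 1 := by
      rw [geom_sum_eq hzne, pow_succ, hzm, one_mul, div_self (sub_ne_zero.mpr hzne)]
    rw [hins, Finset.sum_insert (by simp)] at h0
    simp only [pow_zero] at h0
    linear_combination h0

lemma moebius_ind (m : ℕ) : (∑ d ∈ m.divisors, (μ d : ℤ)) = if m = 1 then 1 else 0 := by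
  have := ArithmeticFunction.coe_mul_zeta_apply (f := (μ : ArithmeticFunction ℤ)) (x := m)
  rw [ArithmeticFunction.moebius_mul_coe_zeta] at this
  rw [← this, ArithmeticFunction.one_apply]

lemma ramanujan_eq (n q : ℕ) (hq : 1 ≤ q) :
    ramanujanSum q n = ∑ d ∈ (q.gcd n).divisors, (d : ℂ) * ((μ (q / d) : ℤ) : ℂ) := by
  have hq0 : q ≠ 0 := by omega
  set E : ℕ → ℂ := fun k => Complex.exp (2 * (Real.pi : ℂ) * Complex.I * (k : ℂ) * (n : ℂ) / (q : ℂ)) with hE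
  have step1 : ramanujanSum q n = ∑ k ∈ Finset.Icc 1 q, (if k.gcd q = 1 then (1:ℂ) else 0) * E k := by
    rw [ramanujanSum, Finset.sum_filter]
    exact Finset.sum_congr rfl (fun k _ => by rw [hE]; split <;> simp)
  have step2 : ∀ k : ℕ, (if k.gcd q = 1 then (1:ℂ) else 0) = ∑ d ∈ (k.gcd q).divisors, ((μ d : ℤ) : ℂ) := by
    intro k
    have := moebius_ind (k.gcd q)
    have h2 : ((∑ d ∈ (k.gcd q).divisors, (μ d : ℤ) : ℤ) : ℂ) = if k.gcd q = 1 then (1:ℂ) else 0 := by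
      rw [this]; split <;> simp
    rw [← h2]; push_cast; ring
  have hdiv : ∀ k, k ∈ Finset.Icc 1 q → (k.gcd q).divisors = q.divisors.filter (· ∣ k) := by
    intro k hk
    simp only [Finset.mem_Icc] at hk
    ext d
    simp only [Nat.mem_divisors, Finset.mem_filter, Nat.dvd_gcd_iff]
    constructor
    · rintro ⟨⟨h1, h2⟩, -⟩; exact ⟨⟨h2, hq0⟩, h1⟩
    · rintro ⟨⟨h2, -⟩, h1⟩; exact ⟨⟨h1, h2⟩, Nat.gcd_ne_zero_right hq0⟩
  have step3 : ramanujanSum q n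
      = ∑ d ∈ q.divisors, ∑ k ∈ (Finset.Icc 1 q).filter (d ∣ ·), ((μ d : ℤ) : ℂ) * E k := by
    rw [step1]
    rw [Finset.sum_congr rfl (fun k hk => by
      rw [step2 k, hdiv k hk, Finset.sum_mul])]
    refine Finset.sum_comm' ?_
    intro k d
    simp only [Finset.mem_filter, Finset.mem_Icc]
    tauto
  have inner : ∀ d ∈ q.divisors,
      ∑ k ∈ (Finset.Icc 1 q).filter (d ∣ ·), E k = if (q / d) ∣ n then ((q / d : ℕ) : ℂ) else 0 := by
    intro d hd
    rw [Nat.mem_divisors] at hd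
    obtain ⟨hdq, -⟩ := hd
    have hd0 : d ≠ 0 := by rintro rfl; exact hq0 (Nat.eq_zero_of_zero_dvd hdq)
    have hqd1 : 1 ≤ q / d := Nat.one_le_div_iff (by omega) |>.mpr (Nat.le_of_dvd (by omega) hdq)
    rw [← fullSum n (q / d) hqd1]
    refine Finset.sum_nbij' (fun k => k / d) (fun j => d * j) ?_ ?_ ?_ ?_ ?_
    · intro k hk
      simp only [Finset.mem_filter, Finset.mem_Icc] at hk
      obtain ⟨⟨h1, h2⟩, h3⟩ := hk
      simp only [Finset.mem_Icc]
      constructor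
      · exact Nat.one_le_div_iff (by omega) |>.mpr (Nat.le_of_dvd (by omega) h3)
      · exact Nat.div_le_div_right h2
    · intro j hj
      simp only [Finset.mem_Icc] at hj
      simp only [Finset.mem_filter, Finset.mem_Icc]
      refine ⟨⟨Nat.mul_pos (by omega) hj.1, ?_⟩, Dvd.intro j rfl⟩
      calc d * j ≤ d * (q / d) := Nat.mul_le_mul_left d hj.2
        _ = q := Nat.mul_div_cancel' hdq
    · intro k hk
      simp only [Finset.mem_filter] at hk
      exact Nat.mul_div_cancel' hk.2
    · intro j hj
      exact Nat.mul_div_cancel_left j (by omega)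
    · intro k hk
      simp only [Finset.mem_filter, Finset.mem_Icc] at hk
      obtain ⟨⟨h1, h2⟩, h3⟩ := hk
      have hcast : (q : ℂ) = (d : ℂ) * ((q / d : ℕ) : ℂ) := by
        rw [← Nat.cast_mul, Nat.mul_div_cancel' hdq]
      have hk' : (k : ℂ) = (d : ℂ) * ((k / d : ℕ) : ℂ) := by
        rw [← Nat.cast_mul, Nat.mul_div_cancel' h3]
      have hd0' : (d : ℂ) ≠ 0 := Nat.cast_ne_zero.mpr hd0
      have hqd0' : ((q / d : ℕ) : ℂ) ≠ 0 := Nat.cast_ne_zero.mpr (by omega)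
      rw [hE]
      simp only
      rw [hcast, hk']
      congr 1
      field_simp
  have step4 : ramanujanSum q n = ∑ d ∈ q.divisors, ((μ d : ℤ) : ℂ) * (if (q / d) ∣ n then ((q / d : ℕ) : ℂ) else 0) := by
    rw [step3]
    refine Finset.sum_congr rfl (fun d hd => ?_)
    rw [← Finset.mul_sum, inner d hd]
  have step5 : ramanujanSum q n = ∑ d ∈ q.divisors, ((μ (q / d) : ℤ) : ℂ) * (if d ∣ n then (d : ℂ) else 0) := by
    rw [step4, ← Nat.sum_div_divisors q (fun d => ((μ (q / d) : ℤ) : ℂ) * (if d ∣ n then (d : ℂ) else 0))]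
    refine Finset.sum_congr rfl (fun d hd => ?_)
    rw [Nat.mem_divisors] at hd
    rw [Nat.div_div_self hd.1 hq0]
  rw [step5]
  have hgcd : (q.gcd n).divisors = q.divisors.filter (· ∣ n) := by
    ext d
    simp only [Nat.mem_divisors, Finset.mem_filter, Nat.dvd_gcd_iff]
    constructor
    · rintro ⟨⟨h1, h2⟩, -⟩; exact ⟨⟨h1, hq0⟩, h2⟩
    · rintro ⟨⟨h1, -⟩, h2⟩; exact ⟨⟨h1, h2⟩, Nat.gcd_ne_zero_left hq0⟩
  rw [hgcd, Finset.sum_filter]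
  refine Finset.sum_congr rfl (fun d hd => ?_)
  split <;> ring

noncomputable def G (n q : ℕ) : ℂ :=
  ∑ d ∈ (q.gcd n).divisors, (d : ℂ) * ((μ (q / d) : ℤ) : ℂ)

noncomputable def Fn (n : ℕ) (s : ℂ) (q : ℕ) : ℂ :=
  ((μ q : ℤ) : ℂ) * G n q / ((q : ℂ) ^ (s - 1) * (q.totient : ℂ))

noncomputable def Hfun (n : ℕ) : ArithmeticFunction ℂ :=
  ⟨fun d => if d ∣ n then (d : ℂ) else 0, by simp⟩

lemma Hfun_apply (n d : ℕ) : Hfun n d = if d ∣ n then (d : ℂ) else 0 := rfl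

lemma Hfun_mult (n : ℕ) : (Hfun n).IsMultiplicative := by
  refine ⟨by simp [Hfun_apply], fun {a b} hab => ?_⟩
  simp only [Hfun_apply]
  by_cases hab' : a * b ∣ n
  · rw [if_pos hab', if_pos (dvd_trans (dvd_mul_right a b) hab'),
      if_pos (dvd_trans (dvd_mul_left b a) hab')]
    push_cast; ring
  · rw [if_neg hab']
    by_cases ha : a ∣ n
    · by_cases hb : b ∣ n
      · exact absurd (Nat.Coprime.mul_dvd_of_dvd_of_dvd hab ha hb) hab'
      · rw [if_neg hb, mul_zero]
    · rw [if_neg ha, zero_mul]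

lemma G_eq (n : ℕ) (hn : n ≠ 0) (q : ℕ) :
    G n q = (Hfun n * ((μ : ArithmeticFunction ℤ) : ArithmeticFunction ℂ)) q := by
  rcases Nat.eq_zero_or_pos q with rfl | hq
  · simp only [G, Nat.gcd_zero_left, ArithmeticFunction.map_zero]
    refine Finset.sum_eq_zero (fun d hd => ?_)
    rw [Nat.mem_divisors] at hd
    have : (0 : ℕ) / d = 0 := Nat.zero_div d
    rw [this]
    simp
  · rw [ArithmeticFunction.mul_apply, Nat.sum_divisorsAntidiagonal (fun x y => Hfun n x * ((μ : ArithmeticFunction ℤ) : ArithmeticFunction ℂ) y)]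
    have hgcd : (q.gcd n).divisors = q.divisors.filter (· ∣ n) := by
      ext d
      simp only [Nat.mem_divisors, Finset.mem_filter, Nat.dvd_gcd_iff]
      constructor
      · rintro ⟨⟨h1, h2⟩, -⟩; exact ⟨⟨h1, by omega⟩, h2⟩
      · rintro ⟨⟨h1, -⟩, h2⟩; exact ⟨⟨h1, h2⟩, Nat.gcd_ne_zero_left (by omega)⟩
    rw [G, hgcd, Finset.sum_filter]
    refine Finset.sum_congr rfl (fun d hd => ?_)
    simp only [Hfun_apply, intCoe_apply]
    split <;> simp

lemma G_mult (n : ℕ) (hn : n ≠ 0) :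
    G n 1 = 1 ∧ ∀ {a b : ℕ}, Nat.Coprime a b → G n (a * b) = G n a * G n b := by
  have h := (Hfun_mult n).mul (isMultiplicative_moebius.intCast (R := ℂ))
  exact ⟨by rw [G_eq n hn]; exact h.1, fun {a b} hab => by
    rw [G_eq n hn, G_eq n hn, G_eq n hn]; exact h.2 hab⟩

lemma Fn_zero (n : ℕ) (s : ℂ) : Fn n s 0 = 0 := by simp [Fn]

lemma Fn_one (n : ℕ) (hn : n ≠ 0) (s : ℂ) : Fn n s 1 = 1 := by
  simp [Fn, (G_mult n hn).1]

lemma Fn_mult (n : ℕ) (hn : n ≠ 0) (s : ℂ) {a b : ℕ} (hab : Nat.Coprime a b) :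
    Fn n s (a * b) = Fn n s a * Fn n s b := by
  rcases Nat.eq_zero_or_pos a with rfl | ha
  · have : b = 1 := Nat.coprime_zero_left b |>.mp hab
    subst this
    simp [Fn_zero, Fn_one n hn]
  rcases Nat.eq_zero_or_pos b with rfl | hb
  · have : a = 1 := Nat.coprime_zero_right a |>.mp hab
    subst this
    simp [Fn_zero, Fn_one n hn]
  rw [Fn, Fn, Fn, isMultiplicative_moebius.2 hab, (G_mult n hn).2 hab,
    Nat.totient_mul hab, Nat.cast_mul, Complex.natCast_mul_natCast_cpow]
  push_cast
  ring

lemma G_prime (n : ℕ) {p : ℕ} (hp : p.Prime) :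
    G n p = if p ∣ n then (p : ℂ) - 1 else -1 := by
  have hp2' : 2 ≤ p := hp.two_le
  by_cases hpn : p ∣ n
  · rw [if_pos hpn, G, Nat.gcd_eq_left hpn, hp.divisors,
      Finset.sum_pair (by omega : (1:ℕ) ≠ p)]
    rw [Nat.div_one, Nat.div_self hp.pos, moebius_apply_prime hp, moebius_apply_one]
    push_cast; ring
  · rw [if_neg hpn, G]
    have : p.gcd n = 1 := (Nat.Prime.coprime_iff_not_dvd hp).mpr hpn
    rw [this, Nat.divisors_one, Finset.sum_singleton, Nat.div_one, moebius_apply_prime hp]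
    push_cast; ring

lemma cast_pred (p : ℕ) (hp : 1 ≤ p) : ((p - 1 : ℕ) : ℂ) = (p : ℂ) - 1 := by
  push_cast [Nat.cast_sub hp]; ring

lemma Fn_prime (n : ℕ) (s : ℂ) (hs : 1 < s.re) {p : ℕ} (hp : p.Prime) :
    Fn n s p = if p ∣ n then -((p : ℂ) ^ ((1:ℂ) - s)) else
      1 / ((p : ℂ) ^ (s - 1) * ((p : ℂ) - 1)) := by
  have hp2 : 2 ≤ p := hp.two_le
  have hpc : (p : ℂ) ≠ 0 := Nat.cast_ne_zero.mpr hp.pos.ne'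
  have hp1 : (p : ℂ) - 1 ≠ 0 := by
    intro h
    have : (p : ℂ) = ((1 : ℕ) : ℂ) := by push_cast; linear_combination h
    have : p = 1 := Nat.cast_injective this
    omega
  have hpow : (p : ℂ) ^ (s - 1) ≠ 0 := by
    rw [Ne, Complex.cpow_eq_zero_iff]
    tauto
  have htot : ((p.totient : ℕ) : ℂ) = (p : ℂ) - 1 := by
    rw [Nat.totient_prime hp, cast_pred p (by omega)]
  rw [Fn, moebius_apply_prime hp, G_prime n hp, htot]
  by_cases hpn : p ∣ n
  · rw [if_pos hpn, if_pos hpn]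
    have h1s : (p : ℂ) ^ ((1:ℂ) - s) = ((p : ℂ) ^ (s - 1))⁻¹ := by
      rw [show (1:ℂ) - s = -(s-1) by ring, Complex.cpow_neg]
    rw [h1s]
    push_cast
    field_simp
  · rw [if_neg hpn, if_neg hpn]
    push_cast
    field_simp

lemma Fn_prime_pow_zero (n : ℕ) (s : ℂ) {p e : ℕ} (hp : p.Prime) (he : 2 ≤ e) :
    Fn n s (p ^ e) = 0 := by
  rw [Fn, moebius_apply_prime_pow hp (by omega : e ≠ 0), if_neg (by omega)]
  simp

lemma Fn_local (n : ℕ) (hn : n ≠ 0) (s : ℂ) {p : ℕ} (hp : p.Prime) :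
    ∑' e : ℕ, Fn n s (p ^ e) = 1 + Fn n s p := by
  rw [tsum_eq_sum (s := {0, 1}) (fun e he => by
    simp only [Finset.mem_insert, Finset.mem_singleton] at he
    exact Fn_prime_pow_zero n s hp (by omega))]
  rw [Finset.sum_pair (by omega : (0:ℕ) ≠ 1), pow_zero, pow_one, Fn_one n hn]

noncomputable def Kb (n : ℕ) (s : ℂ) (k : ℕ) : ℝ :=
  (if k ∣ n ∧ k ≠ 0 then 1 else 0) + 2 * ((k : ℝ) ^ (s.re))⁻¹

lemma Kb_nonneg (n : ℕ) (s : ℂ) (k : ℕ) : 0 ≤ Kb n s k := by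
  unfold Kb
  have : (0:ℝ) ≤ ((k : ℝ) ^ (s.re))⁻¹ := by positivity
  split <;> nlinarith

lemma Kb_summable (n : ℕ) (hn : n ≠ 0) (s : ℂ) (hs : 1 < s.re) : Summable (Kb n s) := by
  unfold Kb
  refine Summable.add ?_ ?_
  · refine summable_of_ne_finset_zero (s := n.divisors) (fun k hk => ?_)
    rw [if_neg]
    rintro ⟨h1, h2⟩
    exact hk (Nat.mem_divisors.mpr ⟨h1, hn⟩)
  · exact (Real.summable_nat_rpow_inv.mpr hs).mul_left 2

lemma Fn_norm_prime_le (n : ℕ) (hn : n ≠ 0) (s : ℂ) (hs : 1 < s.re) {p : ℕ} (hp : p.Prime) :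
    ‖Fn n s p‖ ≤ Kb n s p := by
  have hp2 : 2 ≤ p := hp.two_le
  have hpR : (1:ℝ) ≤ (p:ℝ) := by exact_mod_cast hp.one_lt.le
  have hpR2 : (2:ℝ) ≤ (p:ℝ) := by exact_mod_cast hp2
  have hp0 : (0:ℝ) < (p:ℝ) := by linarith
  rw [Fn_prime n s hs hp]
  by_cases hpn : p ∣ n
  · rw [if_pos hpn]
    rw [norm_neg, Complex.norm_natCast_cpow_of_pos hp.pos]
    have h1 : ((1:ℂ) - s).re = 1 - s.re := by simp
    rw [h1]
    have : (p:ℝ) ^ (1 - s.re) ≤ 1 :=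
      Real.rpow_le_one_of_one_le_of_nonpos hpR (by linarith)
    unfold Kb
    rw [if_pos ⟨hpn, by omega⟩]
    have : (0:ℝ) ≤ ((p : ℝ) ^ (s.re))⁻¹ := by positivity
    nlinarith
  · rw [if_neg hpn]
    have hnorm : ‖(1 : ℂ) / ((p : ℂ) ^ (s - 1) * ((p : ℂ) - 1))‖
        = 1 / ((p:ℝ) ^ (s.re - 1) * ((p:ℝ) - 1)) := by
      rw [norm_div, norm_one, norm_mul, Complex.norm_natCast_cpow_of_pos hp.pos,
        ← cast_pred p (by omega), Complex.norm_natCast]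
      have : (s - 1).re = s.re - 1 := by simp
      rw [this]
      congr 2
      push_cast [Nat.cast_sub (by omega : 1 ≤ p)]
      ring
    rw [hnorm]
    unfold Kb
    rw [if_neg (by tauto)]
    have hA : (0:ℝ) < (p:ℝ) ^ (s.re - 1) := Real.rpow_pos_of_pos hp0 _
    have hrw : (p:ℝ) ^ (s.re) = (p:ℝ) ^ (s.re - 1) * (p:ℝ) := by
      rw [← Real.rpow_add_one hp0.ne' (s.re - 1)]
      ring_nf
    rw [hrw, zero_add, ← div_eq_mul_inv,
      div_le_div_iff₀ (by nlinarith) (by nlinarith)]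
    nlinarith

lemma Fn_norm_summable (n : ℕ) (hn : n ≠ 0) (s : ℂ) (hs : 1 < s.re) :
    Summable (fun q => ‖Fn n s q‖) := by
  set f : ℕ → ℝ := fun q => ‖Fn n s q‖ with hf
  have hf1 : f 1 = 1 := by simp [hf, Fn_one n hn]
  have hmul : ∀ {a b : ℕ}, Nat.Coprime a b → f (a * b) = f a * f b := by
    intro a b hab
    simp only [hf]
    rw [Fn_mult n hn s hab, norm_mul]
  have hsump : ∀ {p : ℕ}, p.Prime → Summable (fun e : ℕ => ‖f (p ^ e)‖) := by
    intro p hp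
    refine summable_of_ne_finset_zero (s := {0, 1}) (fun e he => ?_)
    simp only [Finset.mem_insert, Finset.mem_singleton] at he
    have h2 : 2 ≤ e := by omega
    simp [hf, Fn_prime_pow_zero n s hp h2]
  have hlocal : ∀ {p : ℕ}, p.Prime → ∑' e : ℕ, f (p ^ e) = 1 + f p := by
    intro p hp
    rw [tsum_eq_sum (s := {0, 1}) (fun e he => by
      simp only [Finset.mem_insert, Finset.mem_singleton] at he
      have h2 : 2 ≤ e := by omega
      simp [hf, Fn_prime_pow_zero n s hp h2])]
    rw [Finset.sum_pair (by omega : (0:ℕ) ≠ 1), pow_zero, pow_one, hf1]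
  set T : ℝ := ∑' k, Kb n s k with hT
  have hbound : ∀ u : Finset ℕ, ∑ q ∈ u, f q ≤ Real.exp T := by
    intro u
    set N : ℕ := u.sup _root_.id + 1 with hN
    obtain ⟨S1, S2⟩ :=
      EulerProduct.summable_and_hasSum_smoothNumbers_prod_primesBelow_tsum hf1 hmul hsump N
    have hP : ∏ p ∈ N.primesBelow, ∑' e : ℕ, f (p ^ e) ≤ Real.exp T := by
      have step : ∀ p ∈ N.primesBelow, ∑' e : ℕ, f (p ^ e) ≤ Real.exp (Kb n s p) := by
        intro p hp
        have hpp : p.Prime := (Nat.mem_primesBelow.mp hp).2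
        rw [hlocal hpp]
        have h1 : f p ≤ Kb n s p := Fn_norm_prime_le n hn s hs hpp
        have h2 : Kb n s p + 1 ≤ Real.exp (Kb n s p) := Real.add_one_le_exp _
        linarith
      calc ∏ p ∈ N.primesBelow, ∑' e : ℕ, f (p ^ e)
          ≤ ∏ p ∈ N.primesBelow, Real.exp (Kb n s p) := by
            refine Finset.prod_le_prod (fun p hp => ?_) step
            rw [hlocal (Nat.mem_primesBelow.mp hp).2]
            have : 0 ≤ f p := norm_nonneg _
            linarith
        _ = Real.exp (∑ p ∈ N.primesBelow, Kb n s p) := (Real.exp_sum _ _).symm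
        _ ≤ Real.exp T := by
            refine Real.exp_le_exp.mpr ?_
            exact Summable.sum_le_tsum _ (fun k _ => Kb_nonneg n s k) (Kb_summable n hn s hs)
    have S1' : Summable (fun m : N.smoothNumbers => f m) :=
      S1.congr (fun m => Real.norm_of_nonneg (norm_nonneg _))
    have hind : Summable (Set.indicator N.smoothNumbers f) :=
      summable_subtype_iff_indicator.mp S1'
    have hval : ∑' q : ℕ, Set.indicator N.smoothNumbers f q
        = ∏ p ∈ N.primesBelow, ∑' e : ℕ, f (p ^ e) := by
      rw [← _root_.tsum_subtype]
      exact S2.tsum_eq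
    have hstep : ∑ q ∈ u, f q ≤ ∑' q : ℕ, Set.indicator N.smoothNumbers f q := by
      have heq : ∀ q ∈ u, f q ≤ Set.indicator N.smoothNumbers f q := by
        intro q hq
        rcases Nat.eq_zero_or_pos q with rfl | hq0
        · have : f 0 = 0 := by simp [hf, Fn_zero]
          rw [this]
          exact Set.indicator_nonneg (fun x _ => norm_nonneg _) 0
        · have hmem : q ∈ N.smoothNumbers := by
            rw [Nat.mem_smoothNumbers]
            refine ⟨by omega, fun p hp => ?_⟩
            have hdvd : p ∣ q := Nat.dvd_of_mem_primeFactorsList hp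
            have : p ≤ q := Nat.le_of_dvd hq0 hdvd
            have : q ≤ u.sup _root_.id := Finset.le_sup (f := _root_.id) hq
            omega
          rw [Set.indicator_of_mem hmem]
      calc ∑ q ∈ u, f q ≤ ∑ q ∈ u, Set.indicator N.smoothNumbers f q :=
            Finset.sum_le_sum heq
        _ ≤ ∑' q : ℕ, Set.indicator N.smoothNumbers f q :=
            Summable.sum_le_tsum u (fun q _ => Set.indicator_nonneg (fun x _ => norm_nonneg _) q) hind
    calc ∑ q ∈ u, f q ≤ ∑' q : ℕ, Set.indicator N.smoothNumbers f q := hstep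
      _ = ∏ p ∈ N.primesBelow, ∑' e : ℕ, f (p ^ e) := hval
      _ ≤ Real.exp T := hP
  exact summable_of_sum_le (fun q => norm_nonneg _) hbound



noncomputable def Fn2 (n : ℕ) (s : ℂ) (q : ℕ) : ℂ :=
  if q.Coprime n then Fn n s q else 0

noncomputable def Efac (n : ℕ) (s : ℂ) (p : Nat.Primes) : ℂ :=
  if (p : ℕ) ∣ n then 1 - ((p : ℕ) : ℂ) ^ ((1 : ℂ) - s)
  else 1 + 1 / (((p : ℕ) : ℂ) ^ (s - 1) * (((p : ℕ) : ℂ) - 1))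

def Sset (n : ℕ) : Set Nat.Primes := {p | (p : ℕ) ∣ n}

def eEquiv (n : ℕ) : {p : ℕ // p.Prime ∧ ¬ (p : ℕ) ∣ n} ≃ ↑(Sset n)ᶜ where
  toFun p := ⟨⟨p.1, p.2.1⟩, p.2.2⟩
  invFun q := ⟨(q.1 : ℕ), q.1.prop, q.2⟩
  left_inv p := rfl
  right_inv q := rfl

section Fn2

variable (n : ℕ) (hn : 2 ≤ n) (s : ℂ) (hs : 1 < s.re)

lemma Fn2_zero : Fn2 n s 0 = 0 := by
  rw [Fn2]
  split <;> simp [Fn_zero]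

lemma Fn2_one (hn : 2 ≤ n) : Fn2 n s 1 = 1 := by
  rw [Fn2, if_pos (Nat.coprime_one_left n), Fn_one n (by omega) s]

lemma Fn2_mult (hn : 2 ≤ n) {a b : ℕ} (hab : Nat.Coprime a b) :
    Fn2 n s (a * b) = Fn2 n s a * Fn2 n s b := by
  rw [Fn2, Fn2, Fn2]
  by_cases hc : (a * b).Coprime n
  · rw [if_pos hc, if_pos (Nat.Coprime.coprime_dvd_left (dvd_mul_right a b) hc),
      if_pos (Nat.Coprime.coprime_dvd_left (dvd_mul_left b a) hc)]
    exact Fn_mult n (by omega) s hab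
  · rw [if_neg hc]
    by_cases ha : a.Coprime n
    · by_cases hb : b.Coprime n
      · exact absurd (Nat.Coprime.mul ha hb) hc
      · rw [if_neg hb, mul_zero]
    · rw [if_neg ha, zero_mul]

lemma Fn2_norm_summable (hn : 2 ≤ n) (hs : 1 < s.re) : Summable (fun q => ‖Fn2 n s q‖) := by
  refine Summable.of_nonneg_of_le (fun q => norm_nonneg _) (fun q => ?_)
    (Fn_norm_summable n (by omega) s hs)
  rw [Fn2]
  split
  · exact le_rfl
  · simp [norm_nonneg]

lemma Fn2_local (hn : 2 ≤ n) (hs : 1 < s.re) {p : ℕ} (hp : p.Prime) :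
    ∑' e : ℕ, Fn2 n s (p ^ e) =
      if p ∣ n then 1 else 1 + Fn n s p := by
  by_cases hpn : p ∣ n
  · rw [if_pos hpn]
    rw [tsum_eq_sum (s := {0}) (fun e he => ?_)]
    · rw [Finset.sum_singleton, pow_zero, Fn2_one n s hn]
    · simp only [Finset.mem_singleton] at he
      rw [Fn2, if_neg (fun hc => ?_)]
      have hpd : p ∣ p ^ e := dvd_pow_self p he
      have : p ∣ Nat.gcd (p ^ e) n := Nat.dvd_gcd hpd hpn
      rw [Nat.Coprime] at hc
      rw [hc] at this
      exact hp.one_lt.ne' (Nat.le_antisymm (Nat.le_of_dvd one_pos this) hp.one_lt.le ▸ rfl)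
  · rw [if_neg hpn]
    have hcop : ∀ e : ℕ, (p ^ e).Coprime n :=
      fun e => Nat.Coprime.pow_left e ((Nat.Prime.coprime_iff_not_dvd hp).mpr hpn)
    have : ∀ e : ℕ, Fn2 n s (p ^ e) = Fn n s (p ^ e) := fun e => if_pos (hcop e)
    rw [tsum_congr this, Fn_local n (by omega) s hp]

end Fn2

set_option maxHeartbeats 1000000 in
theorem stmt_11 (n : ℕ) (hn : 2 ≤ n) (s : ℂ) (hs : 1 < s.re) :
    Multipliable (fun p : {p : ℕ // p.Prime ∧ ¬ (p : ℕ) ∣ n} =>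
      1 + 1 / (((p : ℕ) : ℂ) ^ (s - 1) * (((p : ℕ) : ℂ) - 1))) ∧
    ∑' q : ℕ, ((ArithmeticFunction.moebius q : ℤ) : ℂ) * ramanujanSum q n /
        ((q : ℂ) ^ (s - 1) * (Nat.totient q : ℂ))
      = (∏ p ∈ n.primeFactors, (1 - ((p : ℕ) : ℂ) ^ ((1 : ℂ) - s))) *
        ∏' p : {p : ℕ // p.Prime ∧ ¬ (p : ℕ) ∣ n},
          (1 + 1 / (((p : ℕ) : ℂ) ^ (s - 1) * (((p : ℕ) : ℂ) - 1))) := by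
  have hn0 : n ≠ 0 := by omega
  have hsum := Fn_norm_summable n hn0 s hs
  have hprod : HasProd (fun p : Nat.Primes => ∑' e : ℕ, Fn n s ((p : ℕ) ^ e))
      (∑' q : ℕ, Fn n s q) :=
    EulerProduct.eulerProduct_hasProd (Fn_one n hn0 s)
      (fun {a b} hab => Fn_mult n hn0 s hab) hsum (Fn_zero n s)
  have hEeq : (fun p : Nat.Primes => ∑' e : ℕ, Fn n s ((p : ℕ) ^ e)) = Efac n s := by
    funext p
    rw [Fn_local n hn0 s p.prop, Fn_prime n s hs p.prop, Efac]
    by_cases hpn : (p : ℕ) ∣ n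
    · simp only [if_pos hpn]; ring
    · simp only [if_neg hpn]
  rw [hEeq] at hprod
  have hprod2 : HasProd (fun p : Nat.Primes => ∑' e : ℕ, Fn2 n s ((p : ℕ) ^ e))
      (∑' q : ℕ, Fn2 n s q) :=
    EulerProduct.eulerProduct_hasProd (Fn2_one n s hn)
      (fun {a b} hab => Fn2_mult n s hn hab) (Fn2_norm_summable n s hn hs) (Fn2_zero n s)
  have hEeq2 : (fun p : Nat.Primes => ∑' e : ℕ, Fn2 n s ((p : ℕ) ^ e))
      = Set.mulIndicator (Sset n)ᶜ (Efac n s) := by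
    funext p
    rw [Fn2_local n s hn hs p.prop]
    by_cases hpn : (p : ℕ) ∣ n
    · rw [if_pos hpn, Set.mulIndicator_of_notMem (by simpa [Sset] using hpn)]
    · rw [if_neg hpn, Set.mulIndicator_of_mem (by simpa [Sset] using hpn), Efac, if_neg hpn,
        Fn_prime n s hs p.prop, if_neg hpn]
  rw [hEeq2] at hprod2
  have hprodC : HasProd ((Efac n s ∘ (↑)) : ↑(Sset n)ᶜ → ℂ) (∑' q : ℕ, Fn2 n s q) :=
    hasProd_subtype_iff_mulIndicator.mpr hprod2
  have hSfin : (Sset n).Finite := by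
    have hpre : Sset n = (fun p : Nat.Primes => (p : ℕ)) ⁻¹' (↑n.primeFactors : Set ℕ) := by
      ext p
      simp [Sset, Nat.mem_primeFactors, p.prop, hn0]
    rw [hpre]
    exact (n.primeFactors.finite_toSet).preimage (fun a _ b _ h => Subtype.ext h)
  have hprodS : HasProd (Set.mulIndicator (Sset n) (Efac n s))
      (∏ p ∈ hSfin.toFinset, Efac n s p) := by
    have h1 : HasProd (Set.mulIndicator (Sset n) (Efac n s))
        (∏ p ∈ hSfin.toFinset, Set.mulIndicator (Sset n) (Efac n s) p) :=
      hasProd_prod_of_ne_finset_one (fun p hp =>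
        Set.mulIndicator_of_notMem (fun hmem => hp (hSfin.mem_toFinset.mpr hmem)) _)
    have h2 : ∏ p ∈ hSfin.toFinset, Set.mulIndicator (Sset n) (Efac n s) p
        = ∏ p ∈ hSfin.toFinset, Efac n s p :=
      Finset.prod_congr rfl (fun p hp =>
        Set.mulIndicator_of_mem (hSfin.mem_toFinset.mp hp) _)
    rwa [h2] at h1
  have hcomb : HasProd (Efac n s)
      ((∏ p ∈ hSfin.toFinset, Efac n s p) * ∑' q : ℕ, Fn2 n s q) := by
    have := hprodS.mul hprod2
    have heq : (fun b => Set.mulIndicator (Sset n) (Efac n s) b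
        * Set.mulIndicator (Sset n)ᶜ (Efac n s) b) = Efac n s := by
      funext p
      by_cases hp : p ∈ Sset n
      · rw [Set.mulIndicator_of_mem hp, Set.mulIndicator_of_notMem (by simpa using hp), mul_one]
      · rw [Set.mulIndicator_of_notMem hp, Set.mulIndicator_of_mem (by simpa using hp), one_mul]
    rwa [heq] at this
  have htotal : (∑' q : ℕ, Fn n s q)
      = (∏ p ∈ hSfin.toFinset, Efac n s p) * ∑' q : ℕ, Fn2 n s q :=
    hprod.unique hcomb
  have hecomp : ((Efac n s ∘ (↑)) ∘ eEquiv n) = (fun p : {p : ℕ // p.Prime ∧ ¬ (p : ℕ) ∣ n} =>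
      1 + 1 / (((p : ℕ) : ℂ) ^ (s - 1) * (((p : ℕ) : ℂ) - 1))) := by
    funext p
    exact if_neg p.2.2
  have hmult_target : Multipliable (fun p : {p : ℕ // p.Prime ∧ ¬ (p : ℕ) ∣ n} =>
      1 + 1 / (((p : ℕ) : ℂ) ^ (s - 1) * (((p : ℕ) : ℂ) - 1))) := by
    rw [← hecomp]
    exact ((eEquiv n).multipliable_iff.mpr hprodC.multipliable)
  refine ⟨hmult_target, ?_⟩
  have hLHS : (∑' q : ℕ, ((μ q : ℤ) : ℂ) * ramanujanSum q n /
      ((q : ℂ) ^ (s - 1) * (Nat.totient q : ℂ))) = ∑' q : ℕ, Fn n s q := by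
    refine tsum_congr (fun q => ?_)
    rcases Nat.eq_zero_or_pos q with rfl | hq
    · simp [Fn_zero]
    · rw [ramanujan_eq n q hq, Fn, G]
  rw [hLHS, htotal]
  congr 1
  · refine Finset.prod_bij (fun (p : Nat.Primes) (_ : p ∈ hSfin.toFinset) => (p : ℕ)) ?_ ?_ ?_ ?_
    · intro p hp
      exact Nat.mem_primeFactors.mpr ⟨p.prop, hSfin.mem_toFinset.mp hp, hn0⟩
    · intro p _ q _ h
      exact Subtype.ext h
    · intro b hb
      rw [Nat.mem_primeFactors] at hb
      exact ⟨⟨b, hb.1⟩, hSfin.mem_toFinset.mpr hb.2.1, rfl⟩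
    · intro p hp
      exact if_pos (hSfin.mem_toFinset.mp hp)
  · have h1 : ∏' x, (Efac n s ∘ Subtype.val) ((eEquiv n) x) = ∑' q : ℕ, Fn2 n s q :=
      ((eEquiv n).tprod_eq (Efac n s ∘ Subtype.val)).trans hprodC.tprod_eq
    rw [← hecomp]
    exact h1.symm
end

section
/- Let n ≥ 2 be an integer, let ω(n) denote the number of distinct prime divisors of n, and for real s > 1 define A(s) = ∏_{p | n} ((p−1)(p^{s−1}−1))/(p^s − p^{s−1} + 1), the product taken over the distinct prime divisors p of n. Then the limit as s → 1⁺ (s real) of A(s)/(s−1)^{ω(n)} exists and equals ∏_{p | n} ((p−1)/p)·log p. -/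
open Finset Filter

theorem stmt_12 (n : ℕ) (hn : 2 ≤ n) :
    Filter.Tendsto
      (fun s : ℝ =>
        (∏ p ∈ n.primeFactors,
            (((p : ℝ) - 1) * ((p : ℝ) ^ (s - 1) - 1)) /
              ((p : ℝ) ^ s - (p : ℝ) ^ (s - 1) + 1)) /
          (s - 1) ^ n.primeFactors.card)
      (nhdsWithin 1 (Set.Ioi 1))
      (nhds (∏ p ∈ n.primeFactors, ((p : ℝ) - 1) / (p : ℝ) * Real.log p)) := by
  have key : ∀ p ∈ n.primeFactors,
      Filter.Tendsto (fun s : ℝ =>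
        (((p : ℝ) - 1) * ((p : ℝ) ^ (s - 1) - 1)) /
          ((p : ℝ) ^ s - (p : ℝ) ^ (s - 1) + 1) / (s - 1))
        (nhdsWithin 1 (Set.Ioi 1)) (nhds (((p : ℝ) - 1) / (p : ℝ) * Real.log p)) := by
    intro p hp
    have hp2 : 2 ≤ p := (Nat.prime_of_mem_primeFactors hp).two_le
    have hp0 : (0 : ℝ) < p := by positivity
    have hpne : (p : ℝ) ≠ 0 := ne_of_gt hp0
    -- limit of denominator piece
    have hA : Filter.Tendsto (fun s : ℝ => ((p : ℝ) - 1) /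
        ((p : ℝ) ^ s - (p : ℝ) ^ (s - 1) + 1)) (nhdsWithin 1 (Set.Ioi 1))
        (nhds (((p : ℝ) - 1) / (p : ℝ))) := by
      have h1 : ContinuousAt (fun s : ℝ => (p : ℝ) ^ s) 1 :=
        Real.continuousAt_const_rpow hpne
      have h2 : ContinuousAt (fun s : ℝ => (p : ℝ) ^ (s - 1)) 1 :=
        ContinuousAt.comp (Real.continuousAt_const_rpow hpne)
          (continuousAt_id.sub continuousAt_const)
      have hne : (p : ℝ) ^ (1:ℝ) - (p : ℝ) ^ ((1:ℝ) - 1) + 1 ≠ 0 := by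
        rw [Real.rpow_one, sub_self, Real.rpow_zero]; nlinarith
      have hcont : ContinuousAt (fun s : ℝ => ((p : ℝ) - 1) /
          ((p : ℝ) ^ s - (p : ℝ) ^ (s - 1) + 1)) 1 :=
        ContinuousAt.div continuousAt_const ((h1.sub h2).add continuousAt_const) hne
      have := hcont.tendsto
      simp only [Real.rpow_one, sub_self, Real.rpow_zero] at this
      rw [show ((p:ℝ) - (1:ℝ) + 1) = (p:ℝ) by ring] at this
      exact this.mono_left nhdsWithin_le_nhds
    -- slope limit
    have hB : Filter.Tendsto (fun s : ℝ => ((p : ℝ) ^ (s - 1) - 1) / (s - 1))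
        (nhdsWithin 1 (Set.Ioi 1)) (nhds (Real.log p)) := by
      have h0 : HasDerivAt (fun t : ℝ => (p : ℝ) ^ t)
          ((p : ℝ) ^ ((1:ℝ) - 1) * Real.log p) ((1:ℝ) - 1) :=
        (Real.hasStrictDerivAt_const_rpow hp0 ((1:ℝ) - 1)).hasDerivAt
      have hi : HasDerivAt (fun s : ℝ => s - 1) 1 1 := (hasDerivAt_id 1).sub_const 1
      have hd0 : HasDerivAt (fun s : ℝ => (p : ℝ) ^ (s - 1))
          ((p : ℝ) ^ ((1:ℝ) - 1) * Real.log p * 1) 1 := HasDerivAt.comp 1 h0 hi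
      have hd : HasDerivAt (fun s : ℝ => (p : ℝ) ^ (s - 1)) (Real.log p) 1 := by
        simpa [Real.rpow_zero] using hd0
      rw [hasDerivAt_iff_tendsto_slope] at hd
      have hsub : Set.Ioi (1:ℝ) ⊆ {(1:ℝ)}ᶜ := fun x hx => ne_of_gt hx
      refine (hd.mono_left (nhdsWithin_mono _ hsub)).congr fun s => ?_
      rw [slope_def_field]
      simp [Real.rpow_zero]
    have := hA.mul hB
    refine this.congr fun s => ?_
    rw [div_mul_div_comm, ← div_div]
  refine (tendsto_finset_prod (x := nhdsWithin 1 (Set.Ioi 1)) n.primeFactors key).congr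
    fun s => ?_
  rw [Finset.prod_div_distrib, Finset.prod_const]
end

section
/- Let m ≥ 1 be a fixed integer and let σ > 1 be a real number. Then the series F(σ) = ∑_{q ≥ 1} (μ(q)²/(q^{2σ−2}·φ(q)²))·c_q(m) converges and satisfies F(σ) = ∏_{p | m} (1 + 1/(p^{2σ−2}(p−1))) · ∏_{p prime, p ∤ m} (1 − 1/(p^{2σ−2}(p−1)²)), where the infinite product over primes not dividing m converges. -/
open Finset ArithmeticFunction ArithmeticFunction.Moebius
open scoped ArithmeticFunction.zeta

lemma sum_exp_icc (N n : ℕ) (hN : 0 < N) :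
    ∑ j ∈ Finset.Icc 1 N, Complex.exp (2 * (Real.pi : ℂ) * Complex.I * (j : ℂ) * (n : ℂ) / (N : ℂ))
      = if N ∣ n then (N : ℂ) else 0 := by
  have hN0 : (N : ℂ) ≠ 0 := Nat.cast_ne_zero.mpr hN.ne'
  set z : ℂ := Complex.exp (2 * (Real.pi : ℂ) * Complex.I * (n : ℂ) / (N : ℂ)) with hz
  have hterm : ∀ j : ℕ, Complex.exp (2 * (Real.pi : ℂ) * Complex.I * (j : ℂ) * (n : ℂ) / (N : ℂ)) = z ^ j := by
    intro j
    rw [hz, ← Complex.exp_nat_mul]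
    ring_nf
  by_cases hdvd : N ∣ n
  · obtain ⟨k, rfl⟩ := hdvd
    have hz1 : z = 1 := by
      rw [hz]
      have : 2 * (Real.pi : ℂ) * Complex.I * ((N * k : ℕ) : ℂ) / (N : ℂ)
          = (k : ℤ) * (2 * (Real.pi : ℂ) * Complex.I) := by
        push_cast
        field_simp
      rw [this, Complex.exp_int_mul_two_pi_mul_I]
    simp only [hterm, hz1, one_pow, Finset.sum_const, Nat.card_Icc, nsmul_eq_mul, mul_one]
    simp
  · rw [if_neg hdvd]
    have hzN : z ^ N = 1 := by
      rw [hz, ← Complex.exp_nat_mul]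
      have : (N : ℂ) * (2 * (Real.pi : ℂ) * Complex.I * (n : ℂ) / (N : ℂ))
          = (n : ℤ) * (2 * (Real.pi : ℂ) * Complex.I) := by
        push_cast
        field_simp
      rw [this, Complex.exp_int_mul_two_pi_mul_I]
    have hz1 : z ≠ 1 := by
      intro h
      rw [hz, Complex.exp_eq_one_iff] at h
      obtain ⟨k, hk⟩ := h
      apply hdvd
      have hpi : (2 * (Real.pi : ℂ) * Complex.I) ≠ 0 := by
        simp [Real.pi_ne_zero, Complex.I_ne_zero]
      have h2 : (n : ℂ) = (k : ℂ) * (N : ℂ) := by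
        field_simp at hk
        apply mul_left_cancel₀ hpi
        linear_combination (2 * (Real.pi : ℂ) * Complex.I) * hk
      have h3 : (n : ℤ) = k * N := by exact_mod_cast h2
      have h4 : (N : ℤ) ∣ (n : ℤ) := ⟨k, by linarith⟩
      exact_mod_cast h4
    simp only [hterm]
    rw [← Finset.Ico_add_one_right_eq_Icc, Finset.sum_Ico_eq_sum_range]
    have h1 : ∀ i ∈ Finset.range (N + 1 - 1), z ^ (1 + i) = z * z ^ i := fun i _ => by ring
    rw [Finset.sum_congr rfl h1, ← Finset.mul_sum]
    have h2 : N + 1 - 1 = N := by omega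
    rw [h2, geom_sum_eq hz1, hzN]
    simp
lemma moebius_sum_divisors (x : ℕ) :
    ∑ d ∈ x.divisors, ((μ d : ℤ) : ℂ) = if x = 1 then 1 else 0 := by
  have h : (∑ d ∈ x.divisors, μ d : ℤ) = if x = 1 then 1 else 0 := by
    have h1 : (μ * ζ : ArithmeticFunction ℤ) x = (1 : ArithmeticFunction ℤ) x := by
      rw [moebius_mul_coe_zeta]
    rwa [coe_mul_zeta_apply, one_apply] at h1
  have h2 : (((if x = 1 then 1 else 0 : ℤ)) : ℂ) = if x = 1 then 1 else 0 := by
    split <;> simp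
  rw [← h2, ← h]
  push_cast
  rfl

lemma ramanujanSum_eq_sum_divisors (q n : ℕ) :
    ramanujanSum q n
      = ∑ d ∈ q.divisors, (if d ∣ n then ((μ (q / d) : ℤ) : ℂ) * (d : ℂ) else 0) := by
  rcases Nat.eq_zero_or_pos q with rfl | hq
  · simp [ramanujanSum]
  have hq0 : q ≠ 0 := hq.ne'
  calc ramanujanSum q n
      = ∑ k ∈ Finset.Icc 1 q, (if Nat.gcd k q = 1 then
          Complex.exp (2 * (Real.pi : ℂ) * Complex.I * (k : ℂ) * (n : ℂ) / (q : ℂ)) else 0) := by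
        rw [ramanujanSum, Finset.sum_filter]
    _ = ∑ k ∈ Finset.Icc 1 q, ∑ d ∈ q.divisors, (if d ∣ k then
          ((μ d : ℤ) : ℂ) * Complex.exp (2 * (Real.pi : ℂ) * Complex.I * (k : ℂ) * (n : ℂ) / (q : ℂ)) else 0) := by
        refine Finset.sum_congr rfl fun k hk => ?_
        have hgd : (Nat.gcd k q).divisors = q.divisors.filter (fun d => d ∣ k) := by
          ext d
          simp only [Nat.mem_divisors, Finset.mem_filter]
          constructor
          · rintro ⟨hd, hne⟩
            exact ⟨⟨hd.trans (Nat.gcd_dvd_right _ _), hq0⟩, hd.trans (Nat.gcd_dvd_left _ _)⟩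
          · rintro ⟨⟨hdq, -⟩, hdk⟩
            exact ⟨Nat.dvd_gcd hdk hdq, Nat.gcd_ne_zero_right hq0⟩
        have : (if Nat.gcd k q = 1 then (1 : ℂ) else 0)
            = ∑ d ∈ q.divisors, (if d ∣ k then ((μ d : ℤ) : ℂ) else 0) := by
          rw [← Finset.sum_filter, ← hgd, moebius_sum_divisors]
        calc (if Nat.gcd k q = 1 then
              Complex.exp (2 * (Real.pi : ℂ) * Complex.I * (k : ℂ) * (n : ℂ) / (q : ℂ)) else 0)
            = (if Nat.gcd k q = 1 then (1:ℂ) else 0) *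
              Complex.exp (2 * (Real.pi : ℂ) * Complex.I * (k : ℂ) * (n : ℂ) / (q : ℂ)) := by
              split <;> simp
          _ = _ := by
              rw [this, Finset.sum_mul]
              exact Finset.sum_congr rfl fun d _ => by split <;> simp
    _ = ∑ d ∈ q.divisors, ∑ k ∈ Finset.Icc 1 q, (if d ∣ k then
          ((μ d : ℤ) : ℂ) * Complex.exp (2 * (Real.pi : ℂ) * Complex.I * (k : ℂ) * (n : ℂ) / (q : ℂ)) else 0) :=
        Finset.sum_comm
    _ = ∑ d ∈ q.divisors, ((μ d : ℤ) : ℂ) *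
          (if (q / d) ∣ n then ((q / d : ℕ) : ℂ) else 0) := by
        refine Finset.sum_congr rfl fun d hd => ?_
        obtain ⟨hdq, -⟩ := Nat.mem_divisors.mp hd
        have hd0 : 0 < d := Nat.pos_of_mem_divisors hd
        have he0 : 0 < q / d := Nat.div_pos (Nat.le_of_dvd hq hdq) hd0
        rw [← Finset.sum_filter, ← Finset.mul_sum]
        congr 1
        rw [← sum_exp_icc (q / d) n he0]
        refine Finset.sum_bij' (fun k _ => k / d) (fun j _ => d * j) ?_ ?_ ?_ ?_ ?_
        · intro k hk
          simp only [Finset.mem_filter, Finset.mem_Icc] at hk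
          obtain ⟨⟨hk1, hkq⟩, hdk⟩ := hk
          simp only [Finset.mem_Icc]
          exact ⟨(Nat.one_le_div_iff hd0).mpr (Nat.le_of_dvd hk1 hdk),
            Nat.div_le_div_right hkq⟩
        · intro j hj
          simp only [Finset.mem_Icc] at hj
          simp only [Finset.mem_filter, Finset.mem_Icc]
          obtain ⟨hj1, hj2⟩ := hj
          refine ⟨⟨Nat.one_le_iff_ne_zero.mpr (Nat.mul_ne_zero hd0.ne' (by omega)), ?_⟩,
            Dvd.intro _ rfl⟩
          calc d * j ≤ d * (q / d) := Nat.mul_le_mul_left d hj2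
            _ = q := Nat.mul_div_cancel' hdq
        · intro k hk
          simp only [Finset.mem_filter] at hk
          exact Nat.mul_div_cancel' hk.2
        · intro j hj
          exact Nat.mul_div_cancel_left j hd0
        · intro k hk
          simp only [Finset.mem_filter, Finset.mem_Icc] at hk
          obtain ⟨⟨hk1, hkq⟩, hdk⟩ := hk
          congr 1
          have hqc : (q : ℂ) = (d : ℂ) * ((q / d : ℕ) : ℂ) := by
            exact_mod_cast congrArg (Nat.cast : ℕ → ℂ) (Nat.mul_div_cancel' hdq).symm
          have hkc : (k : ℂ) = (d : ℂ) * ((k / d : ℕ) : ℂ) := by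
            exact_mod_cast congrArg (Nat.cast : ℕ → ℂ) (Nat.mul_div_cancel' hdk).symm
          rw [hqc, hkc]
          have hd0' : (d : ℂ) ≠ 0 := Nat.cast_ne_zero.mpr hd0.ne'
          have he0' : ((q / d : ℕ) : ℂ) ≠ 0 := Nat.cast_ne_zero.mpr he0.ne'
          field_simp
    _ = ∑ d ∈ q.divisors,
          (fun d => if d ∣ n then ((μ (q / d) : ℤ) : ℂ) * (d : ℂ) else 0) (q / d) := by
        refine Finset.sum_congr rfl fun d hd => ?_
        obtain ⟨hdq, -⟩ := Nat.mem_divisors.mp hd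
        simp only [Nat.div_div_self hdq hq0, mul_ite, mul_zero]
    _ = _ := Nat.sum_div_divisors q
          (fun d => if d ∣ n then ((μ (q / d) : ℤ) : ℂ) * (d : ℂ) else 0)

/-- divisor-truncated identity function -/
def divIdAF (m : ℕ) : ArithmeticFunction ℂ :=
  ⟨fun d => if d ∣ m then (d : ℂ) else 0, by simp⟩

lemma divIdAF_apply (m d : ℕ) : divIdAF m d = if d ∣ m then (d : ℂ) else 0 := rfl

lemma divIdAF_mult (m : ℕ) : (divIdAF m).IsMultiplicative := by
  constructor
  · simp [divIdAF_apply]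
  · intro a b hab
    simp only [divIdAF_apply]
    by_cases ha : a ∣ m
    · by_cases hb : b ∣ m
      · rw [if_pos (Nat.Coprime.mul_dvd_of_dvd_of_dvd hab ha hb), if_pos ha, if_pos hb]
        push_cast; ring
      · rw [if_neg (fun h => hb ((dvd_mul_left b a).trans h)), if_pos ha, if_neg hb, mul_zero]
    · rw [if_neg (fun h => ha ((dvd_mul_right a b).trans h)), if_neg ha, zero_mul]

noncomputable def rsAF (m : ℕ) : ArithmeticFunction ℂ :=
  ((μ : ArithmeticFunction ℤ) : ArithmeticFunction ℂ) * divIdAF m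

lemma rsAF_mult (m : ℕ) : (rsAF m).IsMultiplicative :=
  (isMultiplicative_moebius.intCast).mul (divIdAF_mult m)

lemma rsAF_apply (m q : ℕ) :
    rsAF m q = ∑ d ∈ q.divisors, (if d ∣ m then ((μ (q / d) : ℤ) : ℂ) * (d : ℂ) else 0) := by
  rw [rsAF, mul_apply]
  rw [show (∑ x ∈ q.divisorsAntidiagonal,
      ((μ : ArithmeticFunction ℤ) : ArithmeticFunction ℂ) x.1 * divIdAF m x.2)
    = ∑ d ∈ q.divisors,
      ((μ : ArithmeticFunction ℤ) : ArithmeticFunction ℂ) (q / d) * divIdAF m d from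
    Nat.sum_divisorsAntidiagonal'
      (fun a b => ((μ : ArithmeticFunction ℤ) : ArithmeticFunction ℂ) a * divIdAF m b)]
  refine Finset.sum_congr rfl fun d hd => ?_
  rw [divIdAF_apply, intCoe_apply, mul_ite, mul_zero]

lemma totient_prod_primes {s : Finset ℕ} (hs : ∀ p ∈ s, p.Prime) :
    Nat.totient (∏ p ∈ s, p) = ∏ p ∈ s, (p - 1) := by
  induction s using Finset.cons_induction with
  | empty => simp
  | cons a s ha ih =>
    have hap : a.Prime := hs a (Finset.mem_cons_self a s)
    have hcop : Nat.Coprime a (∏ p ∈ s, p) :=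
      Nat.Coprime.prod_right fun p hp =>
        (Nat.coprime_primes hap (hs p (Finset.mem_cons_of_mem hp))).mpr
          (fun h => ha (h ▸ hp))
    rw [Finset.prod_cons, Finset.prod_cons, Nat.totient_mul hcop, Nat.totient_prime hap,
      ih fun p hp => hs p (Finset.mem_cons_of_mem hp)]

lemma sq_totient_bound {q : ℕ} (hsq : Squarefree q) : q ≤ 2 * q.totient ^ 2 := by
  have hprod : ∏ p ∈ q.primeFactors, p = q := Nat.prod_primeFactors_of_squarefree hsq
  have htot : q.totient = ∏ p ∈ q.primeFactors, (p - 1) := by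
    conv_lhs => rw [← hprod]
    exact totient_prod_primes fun p hp => Nat.prime_of_mem_primeFactors hp
  have hptw : ∀ p : ℕ, p.Prime → p ≠ 2 → p ≤ (p - 1) ^ 2 := by
    intro p hp h2
    have h3 : 3 ≤ p := by
      rcases hp.two_le.lt_or_eq with h | h
      · omega
      · omega
    have : p - 1 + 1 = p := by omega
    nlinarith [this, sq_nonneg (p - 1)]
  have key : ∏ p ∈ q.primeFactors, p ≤ 2 * ∏ p ∈ q.primeFactors, (p - 1) ^ 2 := by
    by_cases h2 : 2 ∈ q.primeFactors
    · have hstep : ∏ p ∈ q.primeFactors.erase 2, p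
          ≤ ∏ p ∈ q.primeFactors.erase 2, (p - 1) ^ 2 := by
        refine Finset.prod_le_prod (fun i _ => Nat.zero_le _) (fun p hp => ?_)
        exact hptw p (Nat.prime_of_mem_primeFactors (Finset.mem_of_mem_erase hp))
          (Finset.ne_of_mem_erase hp)
      calc ∏ p ∈ q.primeFactors, p = 2 * ∏ p ∈ q.primeFactors.erase 2, p :=
            (Finset.mul_prod_erase _ _ h2).symm
        _ ≤ 2 * ∏ p ∈ q.primeFactors.erase 2, (p - 1) ^ 2 := Nat.mul_le_mul_left 2 hstep
        _ = 2 * ((2 - 1) ^ 2 * ∏ p ∈ q.primeFactors.erase 2, (p - 1) ^ 2) := by norm_num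
        _ = 2 * ∏ p ∈ q.primeFactors, (p - 1) ^ 2 := by
            rw [Finset.mul_prod_erase _ (fun p => (p - 1) ^ 2) h2]
    · have hstep : ∏ p ∈ q.primeFactors, p ≤ ∏ p ∈ q.primeFactors, (p - 1) ^ 2 := by
        refine Finset.prod_le_prod (fun i _ => Nat.zero_le _) (fun p hp => ?_)
        exact hptw p (Nat.prime_of_mem_primeFactors hp) (fun h => h2 (h ▸ hp))
      omega
  calc q = ∏ p ∈ q.primeFactors, p := hprod.symm
    _ ≤ 2 * ∏ p ∈ q.primeFactors, (p - 1) ^ 2 := key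
    _ = 2 * q.totient ^ 2 := by rw [htot, Finset.prod_pow]

lemma ramanujanSum_eq_rsAF (m q : ℕ) : ramanujanSum q m = rsAF m q := by
  rw [ramanujanSum_eq_sum_divisors, rsAF_apply]

noncomputable def Fterm (m : ℕ) (sigma : ℝ) (q : ℕ) : ℂ :=
  (((μ q : ℤ) : ℂ) ^ 2 / (((q : ℝ) ^ (2 * sigma - 2) : ℝ) * (Nat.totient q : ℂ) ^ 2)) *
    ramanujanSum q m

noncomputable def Gterm (m : ℕ) (sigma : ℝ) (p : ℕ) : ℂ :=
  if p ∣ m then 1 + 1 / ((((p : ℝ) ^ (2 * sigma - 2) : ℝ)) * ((p : ℂ) - 1))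
  else 1 - 1 / ((((p : ℝ) ^ (2 * sigma - 2) : ℝ)) * ((p : ℂ) - 1) ^ 2)

section main

variable {m : ℕ} {sigma : ℝ}

lemma Fterm_zero : Fterm m sigma 0 = 0 := by
  simp [Fterm]

lemma Fterm_one : Fterm m sigma 1 = 1 := by
  simp [Fterm, ramanujanSum_eq_rsAF, rsAF_apply, Nat.divisors_one]

lemma Fterm_mul {a b : ℕ} (hab : Nat.Coprime a b) :
    Fterm m sigma (a * b) = Fterm m sigma a * Fterm m sigma b := by
  simp only [Fterm, ramanujanSum_eq_rsAF]
  rw [(rsAF_mult m).map_mul_of_coprime hab,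
    isMultiplicative_moebius.map_mul_of_coprime hab, Nat.totient_mul hab]
  have hcast : ((a * b : ℕ) : ℝ) ^ (2 * sigma - 2)
      = (a : ℝ) ^ (2 * sigma - 2) * (b : ℝ) ^ (2 * sigma - 2) := by
    rw [Nat.cast_mul, Real.mul_rpow (Nat.cast_nonneg a) (Nat.cast_nonneg b)]
  rw [hcast]
  push_cast
  simp only [div_eq_mul_inv, mul_inv]
  ring

lemma ramanujanSum_prime {p : ℕ} (hp : p.Prime) :
    ramanujanSum p m = (if p ∣ m then (p : ℂ) else 0) - 1 := by
  rw [ramanujanSum_eq_rsAF, rsAF_apply, Nat.Prime.divisors hp]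
  rw [Finset.sum_pair hp.one_lt.ne]
  have h1 : (1 : ℕ) ∣ m := one_dvd m
  rw [if_pos h1, Nat.div_one, Nat.div_self hp.pos, moebius_apply_prime hp,
    moebius_apply_one]
  split <;> push_cast <;> ring

lemma norm_ramanujanSum_le (hm : m ≠ 0) (q : ℕ) :
    ‖ramanujanSum q m‖ ≤ (m : ℝ) * m := by
  rw [ramanujanSum_eq_rsAF, rsAF_apply]
  have habsmu : ∀ x : ℕ, ‖((μ x : ℤ) : ℂ)‖ ≤ 1 := by
    intro x
    by_cases hx : Squarefree x
    · rcases moebius_ne_zero_iff_eq_or.mp (by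
        rw [moebius_ne_zero_iff_squarefree]; exact hx) with h | h <;> simp [h]
    · simp [moebius_eq_zero_of_not_squarefree hx]
  calc ‖∑ d ∈ q.divisors, (if d ∣ m then ((μ (q / d) : ℤ) : ℂ) * (d : ℂ) else 0)‖
      ≤ ∑ d ∈ q.divisors, ‖(if d ∣ m then ((μ (q / d) : ℤ) : ℂ) * (d : ℂ) else 0)‖ :=
        norm_sum_le _ _
    _ ≤ ∑ d ∈ q.divisors, (if d ∣ m then (d : ℝ) else 0) := by
        refine Finset.sum_le_sum fun d hd => ?_
        split
        · rw [norm_mul]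
          have h1 : ‖((μ (q / d) : ℤ) : ℂ)‖ * ‖(d : ℂ)‖ ≤ 1 * ‖(d : ℂ)‖ :=
            mul_le_mul_of_nonneg_right (habsmu _) (norm_nonneg _)
          have h2 : (1 : ℝ) * ‖(d : ℂ)‖ = (d : ℝ) := by simp
          linarith
        · simp
    _ = ∑ d ∈ q.divisors.filter (fun d => d ∣ m), (d : ℝ) := (Finset.sum_filter _ _).symm
    _ ≤ ∑ d ∈ m.divisors, (d : ℝ) := by
        refine Finset.sum_le_sum_of_subset_of_nonneg ?_ (fun i _ _ => Nat.cast_nonneg i)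
        intro d hd
        rw [Finset.mem_filter] at hd
        exact Nat.mem_divisors.mpr ⟨hd.2, hm⟩
    _ ≤ (m : ℝ) * m := by
        have h1 : ∑ d ∈ m.divisors, (d : ℝ) ≤ ∑ d ∈ Finset.Icc 1 m, (d : ℝ) := by
          refine Finset.sum_le_sum_of_subset_of_nonneg ?_ (fun i _ _ => Nat.cast_nonneg i)
          intro d hd
          rw [Finset.mem_Icc]
          exact ⟨Nat.pos_of_mem_divisors hd, Nat.le_of_dvd (Nat.pos_of_ne_zero hm)
            (Nat.mem_divisors.mp hd).1⟩
        refine h1.trans ?_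
        calc ∑ d ∈ Finset.Icc 1 m, (d : ℝ) ≤ ∑ _d ∈ Finset.Icc 1 m, (m : ℝ) :=
            Finset.sum_le_sum fun d hd => by
              exact_mod_cast (Finset.mem_Icc.mp hd).2
          _ ≤ (m : ℝ) * m := by
            rw [Finset.sum_const, Nat.card_Icc]
            simp [nsmul_eq_mul]

lemma summable_norm_Fterm (hm : 1 ≤ m) (hsigma : 1 < sigma) :
    Summable (fun q => ‖Fterm m sigma q‖) := by
  have hB : Summable (fun q : ℕ => 2 * (m : ℝ) ^ 2 * (((q : ℝ) ^ (2 * sigma - 1))⁻¹)) :=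
    (Real.summable_nat_rpow_inv.mpr (by linarith)).mul_left _
  refine Summable.of_nonneg_of_le (fun q => norm_nonneg _) (fun q => ?_) hB
  rcases Nat.eq_zero_or_pos q with rfl | hq
  · rw [Fterm_zero, norm_zero]
    positivity
  by_cases hsq : Squarefree q
  · have hq0 : (0 : ℝ) < q := by exact_mod_cast hq
    have htotpos : (0 : ℝ) < (q.totient : ℝ) := by
      exact_mod_cast Nat.totient_pos.mpr hq
    have hrp : (0 : ℝ) < (q : ℝ) ^ (2 * sigma - 2) := Real.rpow_pos_of_pos hq0 _
    have hmu : ((μ q : ℤ) : ℂ) ^ 2 = 1 := by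
      rcases moebius_ne_zero_iff_eq_or.mp (by
        rw [moebius_ne_zero_iff_squarefree]; exact hsq) with h | h <;> simp [h]
    have hnorm : ‖Fterm m sigma q‖
        = ‖ramanujanSum q m‖ / ((q : ℝ) ^ (2 * sigma - 2) * (q.totient : ℝ) ^ 2) := by
      rw [Fterm, hmu, norm_mul, norm_div, norm_one]
      rw [norm_mul]
      have h1 : ‖(((q : ℝ) ^ (2 * sigma - 2) : ℝ) : ℂ)‖ = (q : ℝ) ^ (2 * sigma - 2) := by
        rw [Complex.norm_real, Real.norm_of_nonneg hrp.le]
      have h2 : ‖((q.totient : ℂ)) ^ 2‖ = (q.totient : ℝ) ^ 2 := by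
        rw [norm_pow, Complex.norm_natCast]
      rw [h1, h2, one_div, div_eq_mul_inv ‖ramanujanSum q m‖, mul_comm]
    rw [hnorm]
    have hden : (q : ℝ) ^ (2 * sigma - 1) / 2
        ≤ (q : ℝ) ^ (2 * sigma - 2) * (q.totient : ℝ) ^ 2 := by
      have h1 : (q : ℝ) ≤ 2 * (q.totient : ℝ) ^ 2 := by
        exact_mod_cast sq_totient_bound hsq
      have h2 : (q : ℝ) ^ (2 * sigma - 1) = (q : ℝ) ^ (2 * sigma - 2) * (q : ℝ) := by
        rw [← Real.rpow_add_one hq0.ne']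
        ring_nf
      rw [h2]
      rw [div_le_iff₀ (by norm_num)]
      calc (q : ℝ) ^ (2 * sigma - 2) * (q : ℝ)
          ≤ (q : ℝ) ^ (2 * sigma - 2) * (2 * (q.totient : ℝ) ^ 2) :=
            mul_le_mul_of_nonneg_left h1 hrp.le
        _ = (q : ℝ) ^ (2 * sigma - 2) * (q.totient : ℝ) ^ 2 * 2 := by ring
    have hdenpos : (0 : ℝ) < (q : ℝ) ^ (2 * sigma - 1) / 2 :=
      div_pos (Real.rpow_pos_of_pos hq0 _) (by norm_num)
    calc ‖ramanujanSum q m‖ / ((q : ℝ) ^ (2 * sigma - 2) * (q.totient : ℝ) ^ 2)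
        ≤ ((m : ℝ) * m) / ((q : ℝ) ^ (2 * sigma - 1) / 2) := by
          refine div_le_div₀ (by positivity) (norm_ramanujanSum_le (by omega) q) hdenpos hden
      _ = 2 * (m : ℝ) ^ 2 * (((q : ℝ) ^ (2 * sigma - 1))⁻¹) := by
          field_simp
  · rw [Fterm, moebius_eq_zero_of_not_squarefree hsq]
    simp only [Int.cast_zero, ne_eq, OfNat.ofNat_ne_zero, not_false_eq_true, zero_pow,
      zero_div, zero_mul, norm_zero]
    positivity

lemma tsum_Fterm_pow_prime {p : ℕ} (hp : p.Prime) :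
    ∑' e : ℕ, Fterm m sigma (p ^ e) = Gterm m sigma p := by
  have hsupp : ∀ e ∉ ({0, 1} : Finset ℕ), Fterm m sigma (p ^ e) = 0 := by
    intro e he
    simp only [Finset.mem_insert, Finset.mem_singleton, not_or] at he
    rw [Fterm, moebius_apply_prime_pow hp he.1, if_neg he.2]
    simp
  rw [tsum_eq_sum hsupp, Finset.sum_pair (by norm_num : (0 : ℕ) ≠ 1), pow_zero, pow_one,
    Fterm_one]
  have hp1 : ((p : ℂ)) - 1 ≠ 0 := by
    have h : (p : ℂ) ≠ 1 := by
      intro h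
      have : p = 1 := by exact_mod_cast h
      exact hp.one_lt.ne' this
    exact sub_ne_zero.mpr h
  have hrp : (0 : ℝ) < (p : ℝ) ^ (2 * sigma - 2) :=
    Real.rpow_pos_of_pos (by exact_mod_cast hp.pos) _
  have hX : ((((p : ℝ) ^ (2 * sigma - 2) : ℝ)) : ℂ) ≠ 0 := by
    exact_mod_cast hrp.ne'
  have hcast : ((p - 1 : ℕ) : ℂ) = (p : ℂ) - 1 := by
    push_cast [Nat.cast_sub hp.one_le]
    ring
  rw [Fterm, ramanujanSum_prime hp, Nat.totient_prime hp, moebius_apply_prime hp, Gterm,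
    hcast]
  by_cases hdvd : p ∣ m
  · rw [if_pos hdvd, if_pos hdvd]
    congr 1
    field_simp
    ring
  · rw [if_neg hdvd, if_neg hdvd]
    have : ((0 : ℂ)) - 1 = -1 := by ring
    rw [this]
    field_simp
    ring

lemma norm_w_eq {p : ℕ} (hp : p.Prime) :
    ‖1 / ((((p : ℝ) ^ (2 * sigma - 2) : ℝ)) * ((p : ℂ) - 1) ^ 2)‖
      = (((p : ℝ) ^ (2 * sigma - 2)) * ((p : ℝ) - 1) ^ 2)⁻¹ := by
  have h1 : ((p : ℂ)) - 1 = (((p : ℝ) - 1 : ℝ) : ℂ) := by push_cast; ring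
  have hp1 : (1 : ℝ) ≤ (p : ℝ) := by exact_mod_cast hp.one_le
  rw [norm_div, norm_one, h1, ← Complex.ofReal_pow, ← Complex.ofReal_mul,
    Complex.norm_real, Real.norm_of_nonneg (by positivity), one_div]

lemma norm_w_lt_one (hsigma : 1 < sigma) {p : ℕ} (hp : p.Prime) :
    ‖1 / ((((p : ℝ) ^ (2 * sigma - 2) : ℝ)) * ((p : ℂ) - 1) ^ 2)‖ < 1 := by
  rw [norm_w_eq hp]
  have hp1 : (1 : ℝ) < (p : ℝ) := by exact_mod_cast hp.one_lt
  have hX : 1 < ((p : ℝ) ^ (2 * sigma - 2)) :=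
    (Real.one_lt_rpow_iff_of_pos (by linarith)).mpr (Or.inl ⟨hp1, by linarith⟩)
  have h2 : (1 : ℝ) ≤ ((p : ℝ) - 1) ^ 2 := by
    have : (1 : ℝ) ≤ (p : ℝ) - 1 := by
      have : (2 : ℝ) ≤ (p : ℝ) := by exact_mod_cast hp.two_le
      linarith
    nlinarith
  have : 1 < ((p : ℝ) ^ (2 * sigma - 2)) * ((p : ℝ) - 1) ^ 2 := by nlinarith
  rw [inv_lt_one_iff₀]
  right; exact this

lemma Gterm_ne_zero (hsigma : 1 < sigma) {p : ℕ} (hp : p.Prime) (hpm : ¬ p ∣ m) :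
    Gterm m sigma p ≠ 0 := by
  rw [Gterm, if_neg hpm]
  intro h
  have h1 : (1 : ℂ) = 1 / ((((p : ℝ) ^ (2 * sigma - 2) : ℝ)) * ((p : ℂ) - 1) ^ 2) := by
    linear_combination h
  have h2 := norm_w_lt_one (sigma := sigma) hsigma hp
  rw [← h1] at h2
  simp at h2

lemma summable_log_G (hsigma : 1 < sigma) :
    Summable (fun p : {p : ℕ // p.Prime ∧ ¬ (p : ℕ) ∣ m} =>
      Complex.log (Gterm m sigma (p : ℕ))) := by
  have hg : Summable (fun p : {p : ℕ // p.Prime ∧ ¬ (p : ℕ) ∣ m} =>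
      6 * (((p : ℕ) : ℝ) ^ 2)⁻¹) := by
    have h1 : Summable (fun n : ℕ => 6 * ((n : ℝ) ^ 2)⁻¹) :=
      (Real.summable_nat_pow_inv.mpr (by norm_num)).mul_left 6
    exact h1.comp_injective Subtype.val_injective
  refine Summable.of_norm_bounded_eventually hg ?_
  rw [Filter.eventually_cofinite]
  have hfin : (Subtype.val ⁻¹' (Set.Iio 3) :
      Set {p : ℕ // p.Prime ∧ ¬ (p : ℕ) ∣ m}).Finite :=
    Set.Finite.preimage (Set.injOn_of_injective Subtype.val_injective) (Set.finite_Iio 3)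
  refine hfin.subset ?_
  intro p hp
  by_contra hlt
  simp only [Set.mem_preimage, Set.mem_Iio, not_lt] at hlt
  apply hp
  -- now prove the bound for (p : ℕ) ≥ 3
  obtain ⟨x, hxp, hxm⟩ := p
  have hxR : (3 : ℝ) ≤ (x : ℝ) := by exact_mod_cast hlt
  have hp1 : (1 : ℝ) < (x : ℝ) := by linarith
  set X : ℝ := (x : ℝ) ^ (2 * sigma - 2) with hXdef
  have hX : 1 < X :=
    (Real.one_lt_rpow_iff_of_pos (by linarith)).mpr (Or.inl ⟨hp1, by linarith⟩)
  set w : ℂ := 1 / (((X : ℝ) : ℂ) * ((x : ℂ) - 1) ^ 2) with hwdef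
  have hnw : ‖w‖ = (X * ((x : ℝ) - 1) ^ 2)⁻¹ := norm_w_eq hxp
  have hD : (0 : ℝ) < X * ((x : ℝ) - 1) ^ 2 := by nlinarith
  have hd4 : (4 : ℝ) ≤ X * ((x : ℝ) - 1) ^ 2 := by nlinarith
  have hw2 : ‖w‖ ≤ 1 / 2 := by
    rw [hnw]
    have h4 : (X * ((x : ℝ) - 1) ^ 2)⁻¹ ≤ (4 : ℝ)⁻¹ :=
      inv_anti₀ (by norm_num) hd4
    linarith
  have hG : Gterm m sigma x = 1 + (-w) := by
    rw [Gterm, if_neg hxm, sub_eq_add_neg, hwdef]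
  rw [hG]
  have hlog : ‖Complex.log (1 + (-w))‖ ≤ 3 / 2 * ‖(-w)‖ :=
    Complex.norm_log_one_add_half_le_self (by rw [norm_neg]; exact hw2)
  rw [norm_neg] at hlog
  have hx2pos : (0 : ℝ) < (x : ℝ) ^ 2 := by positivity
  have key : 3 / 2 * ‖w‖ ≤ 6 * (((x : ℝ)) ^ 2)⁻¹ := by
    rw [hnw, mul_comm (3/2 : ℝ), ← div_eq_inv_mul, mul_comm (6 : ℝ), ← div_eq_inv_mul]
    rw [div_le_div_iff₀ hD hx2pos]
    nlinarith
  linarith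



lemma multipliable_G (hsigma : 1 < sigma) :
    Multipliable (fun p : {p : ℕ // p.Prime ∧ ¬ (p : ℕ) ∣ m} =>
      1 - 1 / ((((p : ℕ) : ℝ) ^ (2 * sigma - 2) : ℝ) * (((p : ℕ) : ℂ) - 1) ^ 2)) := by
  have h : Multipliable (fun (p : {p : ℕ // p.Prime ∧ ¬ (p : ℕ) ∣ m}) => Gterm m sigma (p : ℕ)) :=
    Complex.multipliable_of_summable_log (summable_log_G hsigma)
  refine h.congr fun p => ?_
  rw [Gterm, if_neg p.2.2]

end main

set_option maxHeartbeats 1000000 in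
theorem stmt_17 (m : ℕ) (hm : 1 ≤ m) (sigma : ℝ) (hsigma : 1 < sigma) :
    Summable (fun q : ℕ =>
      (((μ q : ℤ) : ℂ) ^ 2 / (((q : ℝ) ^ (2 * sigma - 2) : ℝ) * (Nat.totient q : ℂ) ^ 2)) *
        ramanujanSum q m) ∧
    Multipliable (fun p : {p : ℕ // p.Prime ∧ ¬ (p : ℕ) ∣ m} =>
      1 - 1 / ((((p : ℕ) : ℝ) ^ (2 * sigma - 2) : ℝ) * (((p : ℕ) : ℂ) - 1) ^ 2)) ∧
    (∑' q : ℕ,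
        (((μ q : ℤ) : ℂ) ^ 2 / (((q : ℝ) ^ (2 * sigma - 2) : ℝ) * (Nat.totient q : ℂ) ^ 2)) *
          ramanujanSum q m)
      = (∏ p ∈ m.primeFactors,
          (1 + 1 / ((((p : ℕ) : ℝ) ^ (2 * sigma - 2) : ℝ) * (((p : ℕ) : ℂ) - 1)))) *
        ∏' p : {p : ℕ // p.Prime ∧ ¬ (p : ℕ) ∣ m},
          (1 - 1 / ((((p : ℕ) : ℝ) ^ (2 * sigma - 2) : ℝ) * (((p : ℕ) : ℂ) - 1) ^ 2)) := by
  have hFsum : Summable (fun q => ‖Fterm m sigma q‖) := summable_norm_Fterm hm hsigma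
  have hHP : HasProd (fun p : Nat.Primes => Gterm m sigma (p : ℕ))
      (∑' q, Fterm m sigma q) := by
    have h := EulerProduct.eulerProduct_hasProd (f := Fterm m sigma) Fterm_one
      (fun {a b} hab => Fterm_mul hab) hFsum Fterm_zero
    have he : (fun p : Nat.Primes => ∑' e : ℕ, Fterm m sigma ((p : ℕ) ^ e))
        = fun p : Nat.Primes => Gterm m sigma (p : ℕ) :=
      funext fun p => tsum_Fterm_pow_prime p.2
    rwa [he] at h
  set S : Set Nat.Primes := {p | (p : ℕ) ∣ m} with hS
  have hfinS : S.Finite := by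
    have h1 : {n : ℕ | n ∣ m}.Finite :=
      (Set.finite_Iic m).subset fun n hn => Nat.le_of_dvd (by omega) hn
    have hSeq : S = (fun p : Nat.Primes => (p : ℕ)) ⁻¹' {n : ℕ | n ∣ m} := rfl
    rw [hSeq]
    exact h1.preimage Nat.Primes.coe_nat_injective.injOn
  haveI : Finite ↥S := hfinS.to_subtype
  have hMS : Multipliable
      ((fun p : Nat.Primes => Gterm m sigma (p : ℕ)) ∘ ((↑) : ↥S → Nat.Primes)) :=
    Multipliable.of_finite
  let T := {p : ℕ // p.Prime ∧ ¬ (p : ℕ) ∣ m}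
  let e2 : ↥Sᶜ ≃ T :=
    { toFun := fun x => ⟨((x : Nat.Primes) : ℕ), (x : Nat.Primes).2, x.2⟩
      invFun := fun y => ⟨⟨(y : ℕ), y.2.1⟩, y.2.2⟩
      left_inv := fun x => Subtype.ext (Subtype.ext rfl)
      right_inv := fun y => Subtype.ext rfl }
  have hMT := multipliable_G (m := m) hsigma
  have hMSc : Multipliable
      ((fun p : Nat.Primes => Gterm m sigma (p : ℕ)) ∘ ((↑) : ↥Sᶜ → Nat.Primes)) := by
    have h1 : Multipliable (fun x : ↥Sᶜ =>
        1 - 1 / (((((x : Nat.Primes) : ℕ) : ℝ) ^ (2 * sigma - 2) : ℝ)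
          * ((((x : Nat.Primes) : ℕ) : ℂ) - 1) ^ 2)) := by
      exact (e2.multipliable_iff.mpr hMT)
    refine h1.congr fun x => ?_
    have hx : ¬ ((x : Nat.Primes) : ℕ) ∣ m := x.2
    simp only [Function.comp_apply, Gterm, if_neg hx]
  refine ⟨hFsum.of_norm, hMT, ?_⟩
  have hsplit := Multipliable.tprod_mul_tprod_compl (f := fun p : Nat.Primes => Gterm m sigma (p : ℕ))
      hMS hMSc
  -- finite part
  let e1 : ↥S ≃ {x // x ∈ m.primeFactors} :=
    { toFun := fun x => ⟨((x : Nat.Primes) : ℕ),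
        Nat.mem_primeFactors.mpr ⟨(x : Nat.Primes).2, x.2, by omega⟩⟩
      invFun := fun y => ⟨⟨(y : ℕ), Nat.prime_of_mem_primeFactors y.2⟩,
        Nat.dvd_of_mem_primeFactors y.2⟩
      left_inv := fun x => Subtype.ext (Subtype.ext rfl)
      right_inv := fun y => Subtype.ext rfl }
  have hfin : (∏' x : ↥S, Gterm m sigma ((x : Nat.Primes) : ℕ))
      = ∏ p ∈ m.primeFactors,
          (1 + 1 / ((((p : ℕ) : ℝ) ^ (2 * sigma - 2) : ℝ) * (((p : ℕ) : ℂ) - 1))) := by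
    have h1 : (∏' x : ↥S, Gterm m sigma ((x : Nat.Primes) : ℕ))
        = ∏' y : {x // x ∈ m.primeFactors}, Gterm m sigma (y : ℕ) :=
      e1.tprod_eq (fun y : {x // x ∈ m.primeFactors} => Gterm m sigma (y : ℕ))
    rw [h1, Finset.tprod_subtype m.primeFactors (fun p => Gterm m sigma p)]
    refine Finset.prod_congr rfl fun p hp => ?_
    rw [Gterm, if_pos (Nat.dvd_of_mem_primeFactors hp)]
  have hcompl : (∏' x : ↥Sᶜ, Gterm m sigma ((x : Nat.Primes) : ℕ))
      = ∏' p : T, (1 - 1 / ((((p : ℕ) : ℝ) ^ (2 * sigma - 2) : ℝ)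
          * (((p : ℕ) : ℂ) - 1) ^ 2)) := by
    rw [← e2.tprod_eq (fun p : T => 1 - 1 / ((((p : ℕ) : ℝ) ^ (2 * sigma - 2) : ℝ)
          * (((p : ℕ) : ℂ) - 1) ^ 2))]
    refine tprod_congr fun x => ?_
    have hx : ¬ ((x : Nat.Primes) : ℕ) ∣ m := x.2
    rw [Gterm, if_neg hx]
    rfl
  calc ∑' q, Fterm m sigma q = ∏' p : Nat.Primes, Gterm m sigma (p : ℕ) := hHP.tprod_eq.symm
    _ = (∏' x : ↥S, Gterm m sigma ((x : Nat.Primes) : ℕ))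
        * ∏' x : ↥Sᶜ, Gterm m sigma ((x : Nat.Primes) : ℕ) := hsplit.symm
    _ = _ := by rw [hfin, hcompl]
end
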